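/- arXiv:1309.5484 — 5 statements merged into one kernel-verified Lean document; each statement's English description precedes it below -/
import Mathlib

section
/- Let X be a T1 topological space with a sequence of open covers (G_n) that is a weak development (i.e., for every x ∈ X and every choice of G_n ∈ 𝒢_n with x ∈ G_n for all n, the sequence of finite intersections (⋂_{i≤n} G_i)_n is a neighborhood base at x). Then the sequence (G_n) is a G_δ-diagonal sequence, i.e., for every x ∈ X, ⋂_n St(x, 𝒢_n) = {x}, where St(x, 𝒢_n) = ⋃{G ∈ 𝒢_n ∣ x ∈ G}. -/
open Set Topology Filter

variable {X : Type*}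

/-- A distance function: `d x y = 0 ↔ x = y` and symmetric. -/
def IsDistance (d : X → X → NNReal) : Prop :=
  (∀ x y, d x y = 0 ↔ x = y) ∧ (∀ x y, d x y = d y x)

/-- The ball of radius `ε` around `x` for the distance `d`. -/
def dball (d : X → X → NNReal) (x : X) (ε : NNReal) : Set X := {y | d x y < ε}

/-- The intersection `⋂_{k=1}^n V_k^x` for a family `V`. -/
def cInter (V : X → ℕ → Set X) (x : X) (n : ℕ) : Set X := ⋂ k ∈ Finset.Icc 1 n, V x k

lemma cInter_anti (V : X → ℕ → Set X) (x : X) {m n : ℕ} (h : m ≤ n) :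
    cInter V x n ⊆ cInter V x m := by
  intro y hy
  simp only [cInter, Set.mem_iInter] at *
  exact fun k hk => hy k (Finset.mem_Icc.mpr ⟨(Finset.mem_Icc.mp hk).1,
    le_trans (Finset.mem_Icc.mp hk).2 h⟩)

/-- The family `V` is adapted to `d`: `x ∈ ⋂_{k=1}^n V_k^x ⊆ B(x, 2^{-n})`. -/
def Adapted (d : X → X → NNReal) (V : X → ℕ → Set X) : Prop :=
  ∀ x : X, ∀ n : ℕ, 1 ≤ n →
    x ∈ cInter V x n ∧ cInter V x n ⊆ dball d x ((1/2 : NNReal) ^ n)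

/-- The topology `𝒯_{d,𝒱}`: `U` is open iff each `x ∈ U` has `⋂_{k=1}^n V_k^x ⊆ U` for some `n`. -/
def tDV (V : X → ℕ → Set X) : TopologicalSpace X where
  IsOpen U := ∀ x ∈ U, ∃ n : ℕ, cInter V x n ⊆ U
  isOpen_univ := fun _ _ => ⟨0, subset_univ _⟩
  isOpen_inter := by
    intro U W hU hW x hx
    obtain ⟨n, hn⟩ := hU x hx.1
    obtain ⟨m, hm⟩ := hW x hx.2
    exact ⟨max n m, subset_inter ((cInter_anti V x (le_max_left n m)).trans hn)
      ((cInter_anti V x (le_max_right n m)).trans hm)⟩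
  isOpen_sUnion := by
    intro S hS x hx
    obtain ⟨U, hU, hxU⟩ := hx
    obtain ⟨n, hn⟩ := hS U hU x hxU
    exact ⟨n, hn.trans (subset_sUnion_of_mem hU)⟩

/-- The topology `𝒯_d` induced by the distance `d`. -/
def tD (d : X → X → NNReal) : TopologicalSpace X where
  IsOpen U := ∀ x ∈ U, ∃ ε : NNReal, 0 < ε ∧ dball d x ε ⊆ U
  isOpen_univ := fun _ _ => ⟨1, one_pos, subset_univ _⟩
  isOpen_inter := by
    intro U W hU hW x hx
    obtain ⟨ε, hε, hεU⟩ := hU x hx.1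
    obtain ⟨δ, hδ, hδW⟩ := hW x hx.2
    refine ⟨min ε δ, lt_min hε hδ, subset_inter (fun y hy => hεU ?_) (fun y hy => hδW ?_)⟩
    · exact lt_of_lt_of_le (by simpa [dball] using hy) (min_le_left _ _)
    · exact lt_of_lt_of_le (by simpa [dball] using hy) (min_le_right _ _)
  isOpen_sUnion := by
    intro S hS x hx
    obtain ⟨U, hU, hxU⟩ := hx
    obtain ⟨ε, hε, hn⟩ := hS U hU x hxU
    exact ⟨ε, hε, hn.trans (subset_sUnion_of_mem hU)⟩

/-- `𝒱`-convergence of a sequence to `x`. -/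
def VConv (V : X → ℕ → Set X) (xs : ℕ → X) (x : X) : Prop :=
  ∀ m : ℕ, (Set.range xs \ cInter V x m).Finite

/-- The `𝒱`-closure of a set `A`. -/
def CV (V : X → ℕ → Set X) (A : Set X) : Set X :=
  A ∪ {x | ∃ xs : ℕ → X, (∀ n, xs n ∈ A) ∧ (Set.range xs).Infinite ∧ VConv V xs x}

/-- The condition (WS-M) together with `closure = 𝒱`-closure: `(X, d, 𝒱)` is weakly semi-metric. -/
def IsWeaklySemiMetric (d : X → X → NNReal) (V : X → ℕ → Set X) : Prop :=
  IsDistance d ∧ Adapted d V ∧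
  (∀ A : Set X, @closure X (tDV V) A = CV V A) ∧
  (∀ (xs : ℕ → X) (x : X), x ∈ ⋂ n, V (xs n) n →
    (⋂ n, V (xs n) n) = {x} ∧
    ∀ ys : ℕ → X, (∀ n, ys n ∈ ⋂ k ∈ Finset.Iic n, V (xs k) k) →
      Filter.Tendsto ys Filter.atTop (@nhds X (tDV V) x))

section WithTop
variable [TopologicalSpace X]

/-- A sequence of open covers of `X`. -/
def IsOpenCoverSeq (G : ℕ → Set (Set X)) : Prop :=
  ∀ n, (∀ g ∈ G n, IsOpen g) ∧ ⋃₀ G n = Set.univ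

/-- The star `St(x, 𝒢) = ⋃ {g ∈ 𝒢 ∣ x ∈ g}`. -/
def st (G : Set (Set X)) (x : X) : Set X := ⋃₀ {g ∈ G | x ∈ g}

/-- A weak development of `X`. -/
def IsWeakDevelopment (G : ℕ → Set (Set X)) : Prop :=
  IsOpenCoverSeq G ∧
  ∀ (x : X) (g : ℕ → Set X), (∀ n, g n ∈ G n) → (∀ n, x ∈ g n) →
    (𝓝 x).HasBasis (fun _ : ℕ => True) (fun n => ⋂ i ∈ Finset.Iic n, g i)

/-- A weakly `G_δ^*`-diagonal sequence. -/
def IsWeaklyGDeltaStarSeq (G : ℕ → Set (Set X)) : Prop :=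
  IsOpenCoverSeq G ∧
  ∀ (x : X) (g : ℕ → Set X), (∀ n, g n ∈ G n) → (∀ n, x ∈ g n) →
    (⋂ n, closure (⋂ k ∈ Finset.Iic n, g k)) = {x}

/-- A `G_δ^*`-diagonal sequence. -/
def IsGDeltaStarSeq (G : ℕ → Set (Set X)) : Prop :=
  IsOpenCoverSeq G ∧ ∀ x : X, (⋂ n, closure (st (G n) x)) = {x}

/-- A `G_δ`-diagonal sequence. -/
def IsGDeltaDiagSeq (G : ℕ → Set (Set X)) : Prop :=
  IsOpenCoverSeq G ∧ ∀ x : X, (⋂ n, st (G n) x) = {x}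

/-- A weakly `wΔ`-sequence. -/
def IsWeaklyWDeltaSeq (G : ℕ → Set (Set X)) : Prop :=
  IsOpenCoverSeq G ∧
  ∀ (x : X) (g : ℕ → Set X), (∀ n, g n ∈ G n) → (∀ n, x ∈ g n) →
    ∀ xs : ℕ → X, (∀ n, xs n ∈ ⋂ k ∈ Finset.Iic n, g k) →
      ∃ y, MapClusterPt y Filter.atTop xs

end WithTop

lemma mem_st_iff {𝒢 : Set (Set X)} {x y : X} : y ∈ st 𝒢 x ↔ ∃ g ∈ 𝒢, x ∈ g ∧ y ∈ g := by
  simp only [st, mem_sUnion, mem_ofPred_eq, and_assoc]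

lemma mem_st_self {𝒢 : Set (Set X)} (h𝒢 : ⋃₀ 𝒢 = univ) (x : X) : x ∈ st 𝒢 x := by
  obtain ⟨g, hg, hxg⟩ := mem_sUnion.1 (h𝒢.symm ▸ mem_univ x : x ∈ ⋃₀ 𝒢)
  exact mem_st_iff.2 ⟨g, hg, hxg, hxg⟩

/-- `y` specializes to `x`, and specialization is equality in a T1 space. -/
lemma eq_of_forall_mem_of_hasBasis_nhds [TopologicalSpace X] [T1Space X] {ι : Sort*}
    {p : ι → Prop} {s : ι → Set X} {x y : X} (hb : (𝓝 x).HasBasis p s) (hy : ∀ i, p i → y ∈ s i) : y = x :=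
  (specializes_iff_pure.2 (hb.ge_iff.2 fun i hi => mem_pure.2 (hy i hi))).eq

lemma IsWeakDevelopment.iInter_st_subset [TopologicalSpace X] [T1Space X]
    {G : ℕ → Set (Set X)} (hG : IsWeakDevelopment G) (x : X) : ⋂ n, st (G n) x ⊆ {x} := by
  intro y hy
  choose g hgG hxg hyg using fun n => mem_st_iff.1 (mem_iInter.1 hy n)
  exact eq_of_forall_mem_of_hasBasis_nhds (hG.2 x g hgG hxg) fun n _ =>
    mem_iInter₂.2 fun i _ => hyg i

/-- a weak development is a `G_δ`-diagonal sequence. -/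
theorem weakDevelopment_isGDeltaDiagSeq {X : Type*} [TopologicalSpace X] [T1Space X]
    (G : ℕ → Set (Set X)) (hG : IsWeakDevelopment G) :
    IsGDeltaDiagSeq G :=
  ⟨hG.1, fun x => (hG.iInter_st_subset x).antisymm
    (singleton_subset_iff.2 (mem_iInter.2 fun n => mem_st_self (hG.1 n).2 x))⟩
end

section
/- Every weakly symmetric space (X, d, 𝒱) with the topology 𝒯_{d,𝒱} is sequential: every sequentially closed subset is closed. -/
open Set Topology Filter

variable {X : Type*}

/-!
The sets `cInter V x n` need not be neighbourhoods of `x` in `tDV V`, but every open set containing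
`x` contains one of them. Hence choosing `xs n ∈ cInter V x n ∩ A` produces a sequence in `A`
converging to `x`, so a sequentially closed set contains every point all of whose `cInter V x n`
meet it, and its complement is open.
-/

lemma tendsto_tDV_of_forall_mem_cInter (V : X → ℕ → Set X) {xs : ℕ → X} {x : X}
    (hxs : ∀ n, xs n ∈ cInter V x n) : Tendsto xs atTop (@nhds X (tDV V) x) := by
  let _ := tDV V
  refine tendsto_nhds.mpr fun U hU hxU => ?_
  obtain ⟨m, hm⟩ := hU x hxU
  filter_upwards [eventually_ge_atTop m] with n hn
  exact hm (cInter_anti V x hn (hxs n))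

lemma IsSeqClosed.mem_of_forall_cInter_inter_nonempty (V : X → ℕ → Set X) {A : Set X} {x : X}
    (hA : @IsSeqClosed X (tDV V) A) (hx : ∀ n, (cInter V x n ∩ A).Nonempty) : x ∈ A := by
  choose xs hxs hxsA using hx
  exact hA hxsA (tendsto_tDV_of_forall_mem_cInter V hxs)

theorem weaklySymmetric_sequential_general {X : Type*} (V : X → ℕ → Set X) :
    @SequentialSpace X (tDV V) := by
  let _ := tDV V
  refine ⟨fun A hA => isOpen_compl_iff.mp fun x hx => ?_⟩
  by_contra! hmeet
  refine hx (hA.mem_of_forall_cInter_inter_nonempty V fun n => ?_)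
  simpa only [compl_compl] using inter_compl_nonempty_iff.mpr (hmeet n)

/-- every weakly symmetric space is sequential. -/
theorem weaklySymmetric_sequential {X : Type*} (d : X → X → NNReal) (V : X → ℕ → Set X)
    (hd : IsDistance d) (hV : Adapted d V) :
    @SequentialSpace X (tDV V) :=
  weaklySymmetric_sequential_general V
end

section
/- Let (X, d, 𝒱) be a weakly symmetric space in which every set consisting of a convergent sequence together with its limit is closed (this holds in particular when X is Hausdorff). Then for every sequence (x_n) in X, convergence x_n → x in 𝒯_{d,𝒱} implies 𝒱-convergence, i.e., for every m the set {x_n ∣ n ∈ ℕ} \ ⋂_{k=1}^m V_k^x is finite. -/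
open Set Topology Filter

variable {X : Type*}

/- A sequence that avoids `⋂_{k=1}^m V_k^x` infinitely often has a subsequence avoiding it
entirely; that subsequence still converges to `x`, but its range is then closed and misses the
basic set at `x`, so the complement of its range is a neighbourhood of `x` it never enters. -/

lemma Adapted.mem_cInter_self {d : X → X → NNReal} {V : X → ℕ → Set X} (hV : Adapted d V)
    (x : X) (m : ℕ) : x ∈ cInter V x m := by
  rcases Nat.eq_zero_or_pos m with rfl | hm
  · simp [cInter]
  · exact (hV x m hm).1

namespace tDV

variable {V : X → ℕ → Set X}

lemma isOpen_insert {U : Set X} {x : X} {n : ℕ} (hU : IsOpen[tDV V] U)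
    (hn : cInter V x n ⊆ insert x U) : IsOpen[tDV V] (insert x U) := by
  rintro z (rfl | hz)
  · exact ⟨n, hn⟩
  · obtain ⟨k, hk⟩ := hU z hz
    exact ⟨k, hk.trans (subset_insert x U)⟩

lemma not_tendsto_of_forall_notMem_cInter {ys : ℕ → X} {x : X} {m : ℕ}
    (hx : x ∈ cInter V x m) (hys : ∀ n, ys n ∉ cInter V x m)
    (hF : IsClosed[tDV V] (range ys ∪ {x})) :
    ¬ Tendsto ys atTop (@nhds X (tDV V) x) := by
  intro hlim
  have hx_range : x ∉ range ys := by
    rintro ⟨n, rfl⟩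
    exact hys n hx
  have hcompl : insert x (range ys ∪ {x})ᶜ = (range ys)ᶜ := by
    ext z
    by_cases hz : z = x <;> simp [hz, hx_range]
  have hsub : cInter V x m ⊆ (range ys)ᶜ := by
    rintro y hy ⟨n, rfl⟩
    exact hys n hy
  have hopen : IsOpen[tDV V] (range ys)ᶜ :=
    hcompl ▸ isOpen_insert hF.isOpen_compl (hcompl ▸ hsub)
  obtain ⟨n, hn⟩ := (hlim.eventually (@IsOpen.mem_nhds X (tDV V) _ _ hopen hx_range)).exists
  exact hn (mem_range_self n)

lemma eventually_mem_cInter_of_tendsto {xs : ℕ → X} {x : X} {m : ℕ}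
    (hx : x ∈ cInter V x m)
    (hcl : ∀ (ys : ℕ → X), Tendsto ys atTop (@nhds X (tDV V) x) →
      IsClosed[tDV V] (range ys ∪ {x}))
    (hxs : Tendsto xs atTop (@nhds X (tDV V) x)) :
    ∀ᶠ n in atTop, xs n ∈ cInter V x m := by
  by_contra h
  obtain ⟨φ, hφ, hφC⟩ := extraction_of_frequently_atTop (not_eventually.mp h)
  have hlim := hxs.comp hφ.tendsto_atTop
  exact not_tendsto_of_forall_notMem_cInter hx hφC (hcl _ hlim) hlim

end tDV

lemma vConv_of_eventually_mem_cInter {V : X → ℕ → Set X} {xs : ℕ → X} {x : X}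
    (h : ∀ m, ∀ᶠ n in atTop, xs n ∈ cInter V x m) : VConv V xs x := by
  intro m
  have hfin : {n | xs n ∉ cInter V x m}.Finite := by
    rw [← eventually_cofinite, Nat.cofinite_eq_atTop]
    exact h m
  refine (hfin.image xs).subset ?_
  rintro _ ⟨⟨n, rfl⟩, hn⟩
  exact ⟨n, hn, rfl⟩

theorem tendsto_vConv_general {X : Type*} (d : X → X → NNReal) (V : X → ℕ → Set X)
    (hV : Adapted d V)
    (hcl : ∀ (ys : ℕ → X) (y : X), Filter.Tendsto ys Filter.atTop (@nhds X (tDV V) y) →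
      @IsClosed X (tDV V) (Set.range ys ∪ {y})) :
    ∀ (xs : ℕ → X) (x : X), Filter.Tendsto xs Filter.atTop (@nhds X (tDV V) x) →
      VConv V xs x :=
  fun _ x hxs => vConv_of_eventually_mem_cInter fun m =>
    tDV.eventually_mem_cInter_of_tendsto (hV.mem_cInter_self x m) (fun ys => hcl ys x) hxs

/-- if every convergent sequence together with its limit is closed,
then convergence in `𝒯_{d,𝒱}` implies `𝒱`-convergence. -/
theorem tendsto_vConv {X : Type*} (d : X → X → NNReal) (V : X → ℕ → Set X)
    (hd : IsDistance d) (hV : Adapted d V)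
    (hcl : ∀ (ys : ℕ → X) (y : X), Filter.Tendsto ys Filter.atTop (@nhds X (tDV V) y) →
      @IsClosed X (tDV V) (Set.range ys ∪ {y})) :
    ∀ (xs : ℕ → X) (x : X), Filter.Tendsto xs Filter.atTop (@nhds X (tDV V) x) →
      VConv V xs x :=
  tendsto_vConv_general d V hV hcl
end

section
/- Every weakly developable T1 space is weakly semi-metrizable. -/
open Set Topology Filter

variable {X : Type*}

/-! Choose for each point `x` and each `n` a member `g x n ∈ 𝒢_n` containing `x`, and let
`V_n^x = g x 0 ∩ ⋯ ∩ g x n`. By the weak-development property `(V_n^x)_n` is a decreasing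
neighbourhood base at `x`, hence so is `(⋂_{k=1}^n V_k^x)_n`; this gives `𝒯 = 𝒯_{d,𝒱}`, and in a
T1 space a point of `closure A \ A` is the limit of a sequence picked from these sets and `A`,
which must take infinitely many values. Condition (WS-M) is the weak-development property at `x`
applied to the sets `g (x_n) n`. For the distance, let `r(x, y)` be the first `n` with
`y ∉ V_n^x` (finite for `y ≠ x` by T1) and put `d(x, y) = 2^{-(r(x,y) + r(y,x))}`. -/

def partialInter (s : ℕ → Set X) (n : ℕ) : Set X := ⋂ k ∈ Finset.Iic n, s k

lemma mem_partialInter {s : ℕ → Set X} {n : ℕ} {y : X} :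
    y ∈ partialInter s n ↔ ∀ k ≤ n, y ∈ s k := by
  simp [partialInter]

lemma partialInter_subset {s : ℕ → Set X} {k n : ℕ} (hk : k ≤ n) : partialInter s n ⊆ s k :=
  fun _ hy => mem_partialInter.1 hy k hk

lemma partialInter_mono {s s' : ℕ → Set X} (h : ∀ k, s k ⊆ s' k) (n : ℕ) :
    partialInter s n ⊆ partialInter s' n :=
  fun _ hy => mem_partialInter.2 fun k hk => h k (mem_partialInter.1 hy k hk)

lemma partialInter_antitone (s : ℕ → Set X) : Antitone (partialInter s) :=
  fun _ _ hmn _ hy => mem_partialInter.2 fun k hk => mem_partialInter.1 hy k (hk.trans hmn)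

section cInter

variable {V : X → ℕ → Set X} {x : X} {n : ℕ}

lemma cInter_subset (hn : 1 ≤ n) : cInter V x n ⊆ V x n :=
  fun _ hy => mem_iInter₂.1 hy n (Finset.mem_Icc.2 ⟨hn, le_rfl⟩)

lemma subset_cInter_of_antitone (hV : Antitone (V x)) : V x n ⊆ cInter V x n :=
  fun _ hy => mem_iInter₂.2 fun _ hk => hV (Finset.mem_Icc.1 hk).2 hy

lemma Filter.HasAntitoneBasis.cInter {l : Filter X} (h : l.HasAntitoneBasis (V x)) :
    l.HasAntitoneBasis (cInter V x) where
  toHasBasis := h.toHasBasis.to_hasBasis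
    (fun i _ => ⟨i + 1, trivial, (cInter_subset (Nat.le_add_left 1 i)).trans
      (h.antitone (Nat.le_succ i))⟩)
    (fun i _ => ⟨i, trivial, subset_cInter_of_antitone h.antitone⟩)
  antitone _ _ := cInter_anti V x

variable [t : TopologicalSpace X]

lemma eq_tDV_of_hasAntitoneBasis (h : ∀ x, (𝓝 x).HasAntitoneBasis (cInter V x)) :
    t = tDV V := by
  refine TopologicalSpace.ext_iff.2 fun U => ?_
  rw [isOpen_iff_mem_nhds]
  exact forall₂_congr fun x _ => (h x).mem_iff

lemma vConv_of_tendsto {xs : ℕ → X} (h : (𝓝 x).HasAntitoneBasis (cInter V x))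
    (hxs : Tendsto xs atTop (𝓝 x)) : VConv V xs x := by
  intro m
  obtain ⟨N, hN⟩ := eventually_atTop.1 (hxs (h.mem m))
  refine ((finite_Iio N).image xs).subset ?_
  rintro _ ⟨⟨k, rfl⟩, hk⟩
  exact ⟨k, not_le.1 fun hNk => hk (hN k hNk), rfl⟩

lemma mem_closure_of_vConv {xs : ℕ → X} (h : (𝓝 x).HasAntitoneBasis (cInter V x))
    (hinf : (range xs).Infinite) (hxs : VConv V xs x) : x ∈ closure (range xs) := by
  refine (mem_closure_iff_nhds_basis' h.toHasBasis).2 fun m _ => ?_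
  rw [inter_comm, ← sdiff_sdiff_right_self]
  exact (hinf.sdiff (hxs m)).nonempty

lemma closure_eq_CV [T1Space X] (h : ∀ x, (𝓝 x).HasAntitoneBasis (cInter V x)) (A : Set X) :
    closure A = CV V A := by
  refine subset_antisymm (fun x hx => ?_) ?_
  · by_cases hxA : x ∈ A
    · exact Or.inl hxA
    have hpick : ∀ n, ∃ y ∈ A, y ∈ cInter V x n := fun n =>
      (mem_closure_iff_nhds_basis (h x).toHasBasis).1 hx n trivial
    choose a haA haV using hpick
    have ha : Tendsto a atTop (𝓝 x) := (h x).tendsto haV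
    refine Or.inr ⟨a, haA, fun hfin => hxA ?_, vConv_of_tendsto (h x) ha⟩
    -- a finite set is closed in a T1 space, so it contains the limit `x` of `a`
    obtain ⟨n, rfl⟩ := hfin.isClosed.closure_subset
      (mem_closure_of_tendsto ha (Eventually.of_forall mem_range_self))
    exact haA n
  · rintro x (hxA | ⟨xs, hxsA, hinf, hxs⟩)
    · exact subset_closure hxA
    · exact closure_mono (range_subset_iff.2 hxsA) (mem_closure_of_vConv (h x) hinf hxs)

end cInter

lemma iInter_eq_singleton_of_hasBasis [TopologicalSpace X] [T1Space X] {ι : Sort*}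
    {s : ι → Set X} {x : X} (h : (𝓝 x).HasBasis (fun _ => True) s) : ⋂ i, s i = {x} := by
  simpa using biInter_basis_nhds h

section sepDist

variable (V : X → ℕ → Set X)

/-- The first `n` with `y ∉ V x n`; it is `0` (as `sInf ∅ = 0`) when there is none. -/
noncomputable def sepIndex (x y : X) : ℕ := sInf {n | y ∉ V x n}

open Classical in
noncomputable def sepDist (x y : X) : NNReal :=
  if x = y then 0 else (1 / 2) ^ (sepIndex V x y + sepIndex V y x)

lemma isDistance_sepDist : IsDistance (sepDist V) := by
  refine ⟨fun x y => ?_, fun x y => ?_⟩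
  · by_cases hxy : x = y <;> simp [sepDist, hxy]
  · by_cases hxy : x = y
    · rw [hxy]
    · simp only [sepDist, hxy, Ne.symm hxy, if_false, add_comm]

variable {V}

lemma lt_sepIndex {x y : X} {n : ℕ} (hV : Antitone (V x)) (hsep : ∃ m, y ∉ V x m)
    (hy : y ∈ V x n) : n < sepIndex V x y :=
  not_le.1 fun hle => Nat.sInf_mem hsep (hV hle hy)

lemma sepDist_lt {x y : X} {n : ℕ} (hV : Antitone (V x)) (hsep : ⋂ m, V x m = {x})
    (hy : y ∈ V x n) : sepDist V x y < (1 / 2) ^ n := by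
  by_cases hxy : x = y
  · simp [sepDist, hxy]
  have hsep' : ∃ m, y ∉ V x m := by
    by_contra! hall
    exact hxy (hsep ▸ mem_iInter.2 hall : y ∈ ({x} : Set X)).symm
  rw [sepDist, if_neg hxy]
  exact pow_lt_pow_right_of_lt_one₀ (by norm_num) (by norm_num)
    ((lt_sepIndex hV hsep' hy).trans_le (Nat.le_add_right _ _))

lemma adapted_sepDist (hV : ∀ x, Antitone (V x)) (hsep : ∀ x, ⋂ m, V x m = {x}) :
    Adapted (sepDist V) V := by
  intro x n hn
  have hx : x ∈ ⋂ m, V x m := (hsep x).symm ▸ mem_singleton x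
  refine ⟨subset_cInter_of_antitone (hV x) (mem_iInter.1 hx n), fun y hy => ?_⟩
  exact sepDist_lt (hV x) (hsep x) (cInter_subset hn hy)

end sepDist

section WeakDevelopment

variable [TopologicalSpace X] {G : ℕ → Set (Set X)}

lemma IsOpenCoverSeq.exists_mem (hG : IsOpenCoverSeq G) (x : X) (n : ℕ) : ∃ g ∈ G n, x ∈ g := by
  rw [← mem_sUnion, (hG n).2]
  exact mem_univ x

lemma IsWeakDevelopment.hasAntitoneBasis (hG : IsWeakDevelopment G) {g : ℕ → Set X} {x : X}
    (hg : ∀ n, g n ∈ G n) (hx : ∀ n, x ∈ g n) : (𝓝 x).HasAntitoneBasis (partialInter g) :=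
  ⟨hG.2 x g hg hx, partialInter_antitone g⟩

variable {g : X → ℕ → Set X} {xs : ℕ → X} {x : X}

lemma IsWeakDevelopment.hasAntitoneBasis_diag (hG : IsWeakDevelopment G)
    (hg : ∀ y n, g y n ∈ G n) (hx : x ∈ ⋂ n, partialInter (g (xs n)) n) :
    (𝓝 x).HasAntitoneBasis (partialInter fun n => g (xs n) n) :=
  hG.hasAntitoneBasis (fun _ => hg _ _) fun n => partialInter_subset le_rfl (mem_iInter.1 hx n)

lemma IsWeakDevelopment.iInter_diag_eq_singleton [T1Space X] (hG : IsWeakDevelopment G)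
    (hg : ∀ y n, g y n ∈ G n) (hx : x ∈ ⋂ n, partialInter (g (xs n)) n) :
    ⋂ n, partialInter (g (xs n)) n = {x} := by
  refine subset_antisymm (fun y hy => ?_) (singleton_subset_iff.2 hx)
  rw [← iInter_eq_singleton_of_hasBasis (hG.hasAntitoneBasis_diag hg hx).toHasBasis]
  exact mem_iInter.2 fun _ => mem_partialInter.2 fun k _ =>
    partialInter_subset le_rfl (mem_iInter.1 hy k)

lemma IsWeakDevelopment.tendsto_diag (hG : IsWeakDevelopment G) (hg : ∀ y n, g y n ∈ G n)
    (hx : x ∈ ⋂ n, partialInter (g (xs n)) n) {ys : ℕ → X}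
    (hys : ∀ n, ys n ∈ partialInter (fun k => partialInter (g (xs k)) k) n) :
    Tendsto ys atTop (𝓝 x) :=
  (hG.hasAntitoneBasis_diag hg hx).tendsto fun n =>
    partialInter_mono (fun _ => partialInter_subset le_rfl) n (hys n)

end WeakDevelopment

/-- every weakly developable T1 space is weakly semi-metrizable. -/
theorem weaklyDevelopable_weaklySemiMetrizable {X : Type*} [t : TopologicalSpace X] [T1Space X]
    (h : ∃ G : ℕ → Set (Set X), IsWeakDevelopment G) :
    ∃ (d : X → X → NNReal) (V : X → ℕ → Set X), IsWeaklySemiMetric d V ∧ t = tDV V := by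
  obtain ⟨G, hG⟩ := h
  choose g hgG hxg using hG.1.exists_mem
  set V : X → ℕ → Set X := fun x => partialInter (g x)
  have hV : ∀ x, (𝓝 x).HasAntitoneBasis (V x) := fun x => hG.hasAntitoneBasis (hgG x) (hxg x)
  have hcV : ∀ x, (𝓝 x).HasAntitoneBasis (cInter V x) := fun x => (hV x).cInter
  have ht : t = tDV V := eq_tDV_of_hasAntitoneBasis hcV
  have hsep : ∀ x, ⋂ n, V x n = {x} := fun x => iInter_eq_singleton_of_hasBasis (hV x).toHasBasis
  refine ⟨sepDist V, V, ⟨isDistance_sepDist V, adapted_sepDist (fun x => (hV x).antitone) hsep,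
    ?_, ?_⟩, ht⟩
  · rw [← ht]
    exact closure_eq_CV hcV
  · rw [← ht]
    exact fun xs x hx =>
      ⟨hG.iInter_diag_eq_singleton hgG hx, fun ys hys => hG.tendsto_diag hgG hx hys⟩
end

section
/- Let X be a weakly developable T1 space with weak development (𝒢_n) such that 𝒢_1 = {X} and the closures of members of 𝒢_{n+1} refine 𝒢_n for each n. Then for every x ∈ X and every choice G_n ∈ 𝒢_n with x ∈ G_n for all n, one has ⋂_n closure(G_n) = {x}. -/
open Set Topology Filter

variable {X : Type*}

/-! Closures of the `g (n + 1)` lie in members `h n ∈ 𝒢 n`, so every `y ∈ ⋂ closure (g n)` lies with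
`x` on the chain `(h n)`. The finite intersections along that chain form a neighbourhood base at `x`,
so `y` lies in every neighbourhood of `x`, and `T1` forces `y = x`. -/

namespace IsWeakDevelopment

variable [TopologicalSpace X] {G : ℕ → Set (Set X)} {g : ℕ → Set X} {x y : X}

theorem specializes_of_forall_mem (hG : IsWeakDevelopment G) (hg : ∀ n, g n ∈ G n)
    (hx : ∀ n, x ∈ g n) (hy : ∀ n, y ∈ g n) : y ⤳ x :=
  specializes_iff_pure.2 <|
    (hG.2 x g hg hx).ge_iff.2 fun _ _ => mem_pure.2 <| mem_iInter₂.2 fun i _ => hy i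

theorem eq_of_forall_mem [T1Space X] (hG : IsWeakDevelopment G) (hg : ∀ n, g n ∈ G n)
    (hx : ∀ n, x ∈ g n) (hy : ∀ n, y ∈ g n) : y = x :=
  (hG.specializes_of_forall_mem hg hx hy).eq

end IsWeakDevelopment

theorem weakDevelopment_inter_closure_general {X : Type*} [TopologicalSpace X] [T1Space X]
    (G : ℕ → Set (Set X)) (hG : IsWeakDevelopment G)
    (href : ∀ n, ∀ g ∈ G (n + 1), ∃ g' ∈ G n, closure g ⊆ g') :
    ∀ (x : X) (g : ℕ → Set X), (∀ n, g n ∈ G n) → (∀ n, x ∈ g n) →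
      (⋂ n, closure (g n)) = {x} := by
  intro x g hg hx
  choose h hG_h hclosure_h using fun n => href n (g (n + 1)) (hg (n + 1))
  refine Subset.antisymm (fun y hy => ?_) <|
    singleton_subset_iff.2 <| mem_iInter.2 fun n => subset_closure (hx n)
  have hy : ∀ n, y ∈ closure (g n) := mem_iInter.1 hy
  exact hG.eq_of_forall_mem hG_h (fun n => hclosure_h n (subset_closure (hx (n + 1))))
    fun n => hclosure_h n (hy (n + 1))

/-- for a weak development starting with the trivial cover whose closures
refine the previous level, `⋂_n closure (G_n) = {x}` for every choice `x ∈ G_n ∈ 𝒢_n`. -/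
theorem weakDevelopment_inter_closure {X : Type*} [TopologicalSpace X] [T1Space X]
    (G : ℕ → Set (Set X)) (hG : IsWeakDevelopment G)
    (h1 : G 0 = {Set.univ})
    (href : ∀ n, ∀ g ∈ G (n + 1), ∃ g' ∈ G n, closure g ⊆ g') :
    ∀ (x : X) (g : ℕ → Set X), (∀ n, g n ∈ G n) → (∀ n, x ∈ g n) →
      (⋂ n, closure (g n)) = {x} :=
  weakDevelopment_inter_closure_general G hG href
end
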